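/- Let A be a real N×N Hurwitz matrix, B a real N×m matrix, C a real p×N matrix, and let u : [0,∞) → ℝ^m be measurable with ∫₀^∞ ‖u(s)‖₂² ds < ∞. Define the output y(t) = ∫₀^t C e^{(t−s)A} B u(s) ds. Then for every t ≥ 0, ‖y(t)‖₂ ≤ (∫₀^∞ ‖C e^{τA} B‖_F² dτ)^{1/2} · (∫₀^∞ ‖u(s)‖₂² ds)^{1/2}; that is, the L^∞-norm of the output is bounded by the H₂-norm of the transfer function times the L²-norm of the input. -/

import Mathlib

open Matrix MeasureTheory

/-- A real square matrix is Hurwitz if every eigenvalue of it, regarded as a complex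
matrix, has negative real part. -/
def Matrix.IsHurwitz {N : ℕ} (A : Matrix (Fin N) (Fin N) ℝ) : Prop :=
  ∀ μ ∈ spectrum ℂ (A.map (Complex.ofReal)), μ.re < 0

/-- The squared Frobenius norm of a real matrix: `‖M‖_F² = trace (Mᵀ M)`. -/
noncomputable def frobSq {p m : ℕ} (M : Matrix (Fin p) (Fin m) ℝ) : ℝ :=
  Matrix.trace (Mᵀ * M)

/-!
By Cauchy–Schwarz in `s`, `‖y t‖` is at most the product of the `L²(0, t)` norms of
`s ↦ ‖C e^{(t-s)A} B‖_F` and of `u`, hence at most the product of the norms on `[0, ∞)`, provided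
`τ ↦ ‖C e^{τA} B‖_F²` is integrable on `[0, ∞)` (otherwise its integral is the junk value `0`).
That is where the Hurwitz hypothesis enters. Every eigenvalue of `e^A` is `e^μ` for an eigenvalue
`μ` of `A` (take a common eigenvector of the commuting matrices `A` and `e^A`), so the spectral
radius of `e^A` is `< 1`; by Gelfand's formula some power `e^{nA}` has norm `< 1`, and
submultiplicativity turns this into exponential decay of `e^{tA}`.
-/

section Generic
open NormedSpace

theorem Module.End.exists_hasEigenvector_of_commute {K V : Type*} [Field K] [IsAlgClosed K]
    [AddCommGroup V] [Module K V] [FiniteDimensional K V] {f g : Module.End K V}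
    (hfg : Commute f g) {z : K} (hz : g.HasEigenvalue z) :
    ∃ μ v, f.HasEigenvector μ v ∧ g v = z • v := by
  have hmaps : Set.MapsTo f (g.eigenspace z) (g.eigenspace z) :=
    Module.End.mapsTo_genEigenspace_of_comm hfg.symm z 1
  have : Nontrivial (g.eigenspace z) := Submodule.nontrivial_iff_ne_bot.mpr hz
  obtain ⟨μ, hμ⟩ := Module.End.exists_eigenvalue (f.restrict hmaps)
  obtain ⟨w, hw⟩ := hμ.exists_hasEigenvector
  refine ⟨μ, w, ⟨?_, ?_⟩, Module.End.mem_eigenspace_iff.mp w.2⟩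
  · exact Module.End.mem_eigenspace_iff.mpr (congrArg Subtype.val hw.apply_eq_smul)
  · exact fun h0 => hw.2 (Subtype.ext h0)

theorem NormedSpace.exp_mul_of_mul_eq_smul {𝕂 𝔸 : Type*} [RCLike 𝕂] [NormedRing 𝔸]
    [NormedAlgebra 𝕂 𝔸] [CompleteSpace 𝔸] {a x : 𝔸} {μ : 𝕂} (h : a * x = μ • x) :
    exp a * x = exp μ • x := by
  have hpow (k : ℕ) : a ^ k * x = μ ^ k • x := by
    induction k with
    | zero => simp
    | succ k ih => rw [pow_succ', mul_assoc, ih, mul_smul_comm, h, smul_smul, ← pow_succ]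
  rw [exp_eq_tsum 𝕂, exp_eq_tsum 𝕂, ← (expSeries_summable' (𝕂 := 𝕂) a).tsum_mul_right,
    ← (expSeries_summable' (𝕂 := 𝕂) μ).tsum_smul_const]
  congr 1
  ext k
  rw [smul_mul_assoc, hpow, smul_smul, smul_eq_mul]

theorem exists_norm_pow_lt_one_of_forall_norm_lt_one {A : Type*} [NormedRing A]
    [NormedAlgebra ℂ A] [CompleteSpace A] {b : A} (hb : ∀ z ∈ spectrum ℂ b, ‖z‖ < 1) :
    ∃ n, 0 < n ∧ ‖b ^ n‖ < 1 := by
  have hρ : spectralRadius ℂ b < 1 := by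
    rcases subsingleton_or_nontrivial A with hA | hA
    · simp
    · exact_mod_cast spectrum.spectralRadius_lt_of_forall_lt b (r := 1)
        fun z hz => by exact_mod_cast hb z hz
  obtain ⟨n, hn, hpos⟩ :=
    (((spectrum.pow_norm_pow_one_div_tendsto_nhds_spectralRadius b).eventually
      (gt_mem_nhds hρ)).and (Filter.eventually_gt_atTop 0)).exists
  rw [ENNReal.ofReal_lt_one, Real.rpow_lt_one_iff' (norm_nonneg _) (by positivity)] at hn
  exact ⟨n, hpos, hn⟩

theorem exists_norm_exp_smul_le_of_norm_exp_lt_one {𝔸 : Type*} [NormedRing 𝔸]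
    [NormedAlgebra ℝ 𝔸] [CompleteSpace 𝔸] (a : 𝔸) {T : ℝ} (hT : 0 < T)
    (ha : ‖exp (T • a)‖ < 1) :
    ∃ K α : ℝ, 0 < α ∧ ∀ t, 0 ≤ t → ‖exp (t • a)‖ ≤ K * Real.exp (-α * t) := by
  let : NormedAlgebra ℚ 𝔸 := .restrictScalars ℚ ℝ 𝔸
  set q := max ‖exp (T • a)‖ (1 / 2)
  have hq0 : 0 < q := lt_max_of_lt_right (by norm_num)
  have hq1 : q < 1 := max_lt ha (by norm_num)
  have hcont : Continuous fun s : ℝ => exp (s • a) := by fun_prop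
  obtain ⟨K, hK⟩ := (isCompact_Icc (a := -T) (b := 0)).exists_bound_of_continuousOn
    hcont.continuousOn
  refine ⟨K, -Real.log q / T, div_pos (neg_pos.mpr (Real.log_neg hq0 hq1)) hT, fun t ht => ?_⟩
  -- `k ≥ 1`, so that `‖b ^ k‖ ≤ ‖b‖ ^ k` holds even when `‖1‖ > 1` (as for the Frobenius norm)
  set k := ⌊t / T⌋₊ + 1
  have hk : t / T < k := by simpa [k] using Nat.lt_floor_add_one (t / T)
  have hk' : (k : ℝ) ≤ t / T + 1 := by simpa [k] using Nat.floor_le (div_nonneg ht hT.le)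
  rw [div_lt_iff₀ hT] at hk
  rw [div_add_one hT.ne', le_div_iff₀ hT] at hk'
  have hsplit : exp (t • a) = exp (T • a) ^ k * exp ((t - k * T) • a) := by
    have hcomm : Commute (k • T • a) ((t - k * T) • a) :=
      (((Commute.refl a).smul_left T).smul_left k).smul_right _
    rw [← NormedSpace.exp_nsmul, ← exp_add_of_commute hcomm, ← Nat.cast_smul_eq_nsmul ℝ,
      smul_smul, ← add_smul, mul_comm, add_sub_cancel]
  calc ‖exp (t • a)‖ ≤ ‖exp (T • a)‖ ^ k * ‖exp ((t - k * T) • a)‖ := by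
        rw [hsplit]
        exact (norm_mul_le _ _).trans
          (mul_le_mul_of_nonneg_right (norm_pow_le' _ (Nat.succ_pos _)) (norm_nonneg _))
    _ ≤ q ^ k * K := by
        gcongr
        · exact le_max_left _ _
        · exact hK _ ⟨by linarith, by linarith⟩
    _ ≤ q ^ (t / T) * K := by
        have hK0 : 0 ≤ K := (norm_nonneg _).trans (hK 0 ⟨by linarith, le_rfl⟩)
        gcongr
        rw [← Real.rpow_natCast]
        exact Real.rpow_le_rpow_of_exponent_ge hq0 hq1.le ((div_lt_iff₀ hT).mpr hk).le
    _ = K * Real.exp (-(-Real.log q / T) * t) := by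
        rw [Real.rpow_def_of_pos hq0, mul_comm]
        ring_nf

theorem norm_integral_le_sqrt_mul_sqrt {α E : Type*} [MeasurableSpace α] [NormedAddCommGroup E]
    [NormedSpace ℝ E] {μ : Measure α} {f : α → E} {g h : α → ℝ} (hg0 : 0 ≤ g) (hh0 : 0 ≤ h)
    (hg : Integrable g μ) (hh : Integrable h μ) (hf : ∀ x, ‖f x‖ ≤ √(g x) * √(h x)) :
    ‖∫ x, f x ∂μ‖ ≤ √(∫ x, g x ∂μ) * √(∫ x, h x ∂μ) := by
  have hsqrt {k : α → ℝ} (hk0 : 0 ≤ k) (hk : Integrable k μ) : MemLp (fun x => √(k x)) 2 μ := by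
    rw [memLp_two_iff_integrable_sq
      (Real.continuous_sqrt.comp_aestronglyMeasurable hk.aestronglyMeasurable)]
    simpa only [Real.sq_sqrt (hk0 _)] using hk
  have hg2 (x : α) : √(g x) ^ (2 : ℝ) = g x := by rw [Real.rpow_two, Real.sq_sqrt (hg0 x)]
  have hh2 (x : α) : √(h x) ^ (2 : ℝ) = h x := by rw [Real.rpow_two, Real.sq_sqrt (hh0 x)]
  calc ‖∫ x, f x ∂μ‖ ≤ ∫ x, ‖f x‖ ∂μ := norm_integral_le_integral_norm f
    _ ≤ ∫ x, √(g x) * √(h x) ∂μ :=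
        integral_mono_of_nonneg (ae_of_all _ fun x => norm_nonneg _)
          ((hsqrt hg0 hg).integrable_mul (hsqrt hh0 hh)) (ae_of_all _ hf)
    _ ≤ (∫ x, √(g x) ^ (2 : ℝ) ∂μ) ^ (1 / 2 : ℝ) * (∫ x, √(h x) ^ (2 : ℝ) ∂μ) ^ (1 / 2 : ℝ) :=
        integral_mul_le_Lp_mul_Lq_of_nonneg Real.HolderConjugate.two_two
          (ae_of_all _ fun x => Real.sqrt_nonneg _) (ae_of_all _ fun x => Real.sqrt_nonneg _)
          (by simpa using hsqrt hg0 hg) (by simpa using hsqrt hh0 hh)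
    _ = √(∫ x, g x ∂μ) * √(∫ x, h x ∂μ) := by
        simp only [hg2, hh2, ← Real.sqrt_eq_rpow]

theorem setIntegral_Ioc_le_setIntegral_Ici {f : ℝ → ℝ} {a : ℝ} (hf0 : 0 ≤ f)
    (hf : IntegrableOn f (Set.Ici a)) (b : ℝ) :
    ∫ x in Set.Ioc a b, f x ≤ ∫ x in Set.Ici a, f x :=
  setIntegral_mono_set hf (ae_of_all _ fun x => hf0 x)
    (ae_of_all _ fun _ hx => le_of_lt hx.1)

end Generic

section Frobenius
open NormedSpace
open scoped Matrix.Norms.Frobenius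

theorem frobSq_eq_norm_sq {p m : ℕ} (M : Matrix (Fin p) (Fin m) ℝ) : frobSq M = ‖M‖ ^ 2 := by
  rw [frobenius_norm_def, ← Real.sqrt_eq_rpow, Real.sq_sqrt (by positivity), Finset.sum_comm]
  simp [frobSq, trace, mul_apply, sq]

theorem frobSq_nonneg {p m : ℕ} (M : Matrix (Fin p) (Fin m) ℝ) : 0 ≤ frobSq M :=
  frobSq_eq_norm_sq M ▸ sq_nonneg _

theorem norm_toLp_mulVec_le_sqrt_frobSq {p m : ℕ} (M : Matrix (Fin p) (Fin m) ℝ)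
    (w : EuclideanSpace ℝ (Fin m)) :
    ‖WithLp.toLp 2 (M *ᵥ WithLp.ofLp w)‖ ≤ √(frobSq M) * ‖w‖ := by
  rw [frobSq_eq_norm_sq, Real.sqrt_sq (norm_nonneg _)]
  simpa only [← frobenius_norm_replicateCol (ι := Unit), replicateCol_mulVec]
    using frobenius_norm_mul M (replicateCol Unit (WithLp.ofLp w))

theorem Matrix.spectrum_exp_subset {n : Type*} [Fintype n] [DecidableEq n] (M : Matrix n n ℂ) :
    spectrum ℂ (exp M) ⊆ Complex.exp '' spectrum ℂ M := by
  intro z hz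
  rw [← AlgEquiv.spectrum_eq Matrix.toLinAlgEquiv', ← Module.End.hasEigenvalue_iff_mem_spectrum]
    at hz
  obtain ⟨μ, v, hv, hexp⟩ := Module.End.exists_hasEigenvector_of_commute
    ((Commute.refl M).exp_right.map Matrix.toLinAlgEquiv') hz
  refine ⟨μ, ?_, ?_⟩
  · rw [← AlgEquiv.spectrum_eq Matrix.toLinAlgEquiv', ← Module.End.hasEigenvalue_iff_mem_spectrum]
    exact Module.End.hasEigenvalue_of_hasEigenvector hv
  have hMv : M *ᵥ v = μ • v := hv.apply_eq_smul
  have hexpv : exp M *ᵥ v = z • v := hexp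
  -- `vecMulVec v v` is an eigenvector of left multiplication by `M` inside the algebra of matrices
  obtain ⟨i, hi⟩ := Function.ne_iff.mp hv.2
  have hX : vecMulVec v v ≠ 0 := fun h0 => hi (mul_self_eq_zero.mp (congrFun₂ h0 i i))
  have hMX : M * vecMulVec v v = μ • vecMulVec v v := by
    rw [mul_vecMulVec, hMv, smul_vecMulVec]
  have hexpX : exp M * vecMulVec v v = z • vecMulVec v v := by
    rw [mul_vecMulVec, hexpv, smul_vecMulVec]
  have key := hexpX.symm.trans (NormedSpace.exp_mul_of_mul_eq_smul (𝕂 := ℂ) hMX)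
  rw [← Complex.exp_eq_exp_ℂ] at key
  exact (smul_left_injective ℂ hX key).symm

theorem Matrix.IsHurwitz.exists_norm_exp_smul_le {N : ℕ} {A : Matrix (Fin N) (Fin N) ℝ}
    (hA : A.IsHurwitz) :
    ∃ K α : ℝ, 0 < α ∧ ∀ t, 0 ≤ t → ‖exp (t • A)‖ ≤ K * Real.exp (-α * t) := by
  have hσ : ∀ z ∈ spectrum ℂ (exp (A.map Complex.ofReal)), ‖z‖ < 1 := by
    intro z hz
    obtain ⟨μ, hμ, rfl⟩ := (A.map Complex.ofReal).spectrum_exp_subset hz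
    rw [Complex.norm_exp]
    exact Real.exp_lt_one_iff.mpr (hA μ hμ)
  obtain ⟨n, hn, hlt⟩ := exists_norm_pow_lt_one_of_forall_norm_lt_one hσ
  refine exists_norm_exp_smul_le_of_norm_exp_lt_one A (T := n) (by positivity) ?_
  have hmap : (exp ((n : ℝ) • A)).map Complex.ofReal = exp (A.map Complex.ofReal) ^ n := by
    change Complex.ofRealHom.mapMatrix (exp ((n : ℝ) • A)) = _
    rw [Nat.cast_smul_eq_nsmul, Matrix.exp_nsmul, map_pow]
    exact congrArg (· ^ n)
      (map_exp _ (continuous_id.matrix_map Complex.continuous_ofReal) A)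
  calc ‖exp ((n : ℝ) • A)‖ = ‖(exp ((n : ℝ) • A)).map Complex.ofReal‖ :=
        (frobenius_norm_map_eq _ _ Complex.norm_real).symm
    _ = ‖exp (A.map Complex.ofReal) ^ n‖ := congrArg _ hmap
    _ < 1 := hlt

theorem continuous_frobSq_mul_exp_smul_mul {N m p : ℕ} (A : Matrix (Fin N) (Fin N) ℝ)
    (B : Matrix (Fin N) (Fin m) ℝ) (C : Matrix (Fin p) (Fin N) ℝ) :
    Continuous fun τ : ℝ => frobSq (C * exp (τ • A) * B) := by
  simp_rw [frobSq_eq_norm_sq]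
  fun_prop

theorem Matrix.IsHurwitz.integrableOn_frobSq_mul_exp_smul_mul {N m p : ℕ}
    {A : Matrix (Fin N) (Fin N) ℝ} (hA : A.IsHurwitz) (B : Matrix (Fin N) (Fin m) ℝ)
    (C : Matrix (Fin p) (Fin N) ℝ) :
    IntegrableOn (fun τ : ℝ => frobSq (C * exp (τ • A) * B)) (Set.Ici 0) := by
  obtain ⟨K, α, hα, hK⟩ := hA.exists_norm_exp_smul_le
  have hbound (τ : ℝ) (hτ : 0 ≤ τ) : ‖frobSq (C * exp (τ • A) * B)‖ ≤
      (‖C‖ * K * ‖B‖) ^ 2 * Real.exp (-(2 * α) * τ) := by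
    rw [Real.norm_of_nonneg (frobSq_nonneg _), frobSq_eq_norm_sq]
    calc ‖C * exp (τ • A) * B‖ ^ 2 ≤ (‖C‖ * (K * Real.exp (-α * τ)) * ‖B‖) ^ 2 := by
          gcongr
          refine (frobenius_norm_mul _ _).trans ?_
          gcongr
          exact (frobenius_norm_mul _ _).trans (by gcongr; exact hK τ hτ)
      _ = (‖C‖ * K * ‖B‖) ^ 2 * Real.exp (-(2 * α) * τ) := by
          rw [show -(2 * α) * τ = -α * τ + -α * τ by ring, Real.exp_add]
          ring
  have hdom : IntegrableOn (fun τ : ℝ => (‖C‖ * K * ‖B‖) ^ 2 * Real.exp (-(2 * α) * τ))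
      (Set.Ici 0) :=
    (integrableOn_Ici_iff_integrableOn_Ioi).mpr
      ((exp_neg_integrableOn_Ioi 0 (by positivity)).const_mul _)
  exact hdom.mono' (continuous_frobSq_mul_exp_smul_mul A B C).aestronglyMeasurable.restrict
    ((ae_restrict_iff' measurableSet_Ici).mpr (ae_of_all _ hbound))

end Frobenius

theorem output_Linfty_le_H2_mul_L2_general {N m p : ℕ}
    (A : Matrix (Fin N) (Fin N) ℝ) (B : Matrix (Fin N) (Fin m) ℝ)
    (C : Matrix (Fin p) (Fin N) ℝ) (hA : A.IsHurwitz)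
    (u : ℝ → EuclideanSpace ℝ (Fin m))
    (hu_L2 : IntegrableOn (fun s => ‖u s‖ ^ 2) (Set.Ici (0 : ℝ)))
    (y : ℝ → EuclideanSpace ℝ (Fin p))
    (hy : ∀ t : ℝ, y t = ∫ s in (0 : ℝ)..t,
        (WithLp.equiv 2 (Fin p → ℝ)).symm
          ((C * NormedSpace.exp ((t - s) • A) * B).mulVec
            (WithLp.equiv 2 (Fin m → ℝ) (u s)))) :
    ∀ t ≥ (0 : ℝ), ‖y t‖ ≤
      Real.sqrt (∫ τ in Set.Ici (0 : ℝ), frobSq (C * NormedSpace.exp (τ • A) * B)) *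
        Real.sqrt (∫ s in Set.Ici (0 : ℝ), ‖u s‖ ^ 2) := by
  intro t ht
  set g := fun τ : ℝ => frobSq (C * NormedSpace.exp (τ • A) * B)
  have hg0 : 0 ≤ g := fun τ => frobSq_nonneg _
  have hg : IntegrableOn g (Set.Ici 0) := hA.integrableOn_frobSq_mul_exp_smul_mul B C
  have hshift : ∫ s in Set.Ioc 0 t, g (t - s) = ∫ τ in Set.Ioc 0 t, g τ := by
    rw [← intervalIntegral.integral_of_le ht, ← intervalIntegral.integral_of_le ht,
      intervalIntegral.integral_comp_sub_left g t, sub_self, sub_zero]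
  rw [hy t, intervalIntegral.integral_of_le ht]
  calc _ ≤ √(∫ s in Set.Ioc 0 t, g (t - s)) * √(∫ s in Set.Ioc 0 t, ‖u s‖ ^ 2) :=
        norm_integral_le_sqrt_mul_sqrt (fun s => hg0 (t - s)) (fun s => sq_nonneg _)
          ((continuous_frobSq_mul_exp_smul_mul A B C).comp (continuous_sub_left t)).integrableOn_Ioc
          (hu_L2.mono_set fun s hs => le_of_lt hs.1) fun s =>
            (norm_toLp_mulVec_le_sqrt_frobSq _ (u s)).trans_eq
              (by rw [Real.sqrt_sq (norm_nonneg _)])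
    _ ≤ _ := by
        rw [hshift]
        exact mul_le_mul (Real.sqrt_le_sqrt (setIntegral_Ioc_le_setIntegral_Ici hg0 hg t))
          (Real.sqrt_le_sqrt (setIntegral_Ioc_le_setIntegral_Ici (fun s => sq_nonneg _) hu_L2 t))
          (Real.sqrt_nonneg _) (Real.sqrt_nonneg _)

/-- For a Hurwitz system `(A, B, C)` and a square-integrable input `u`,
the output `y(t) = ∫₀^t C e^{(t-s)A} B u(s) ds` satisfies, for every `t ≥ 0`,
`‖y(t)‖₂ ≤ (∫₀^∞ ‖C e^{τA} B‖_F² dτ)^{1/2} · (∫₀^∞ ‖u(s)‖₂² ds)^{1/2}`: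
the `L^∞`-norm of the output is bounded by the `H₂`-norm of the transfer function
times the `L²`-norm of the input. -/
theorem output_Linfty_le_H2_mul_L2 {N m p : ℕ}
    (A : Matrix (Fin N) (Fin N) ℝ) (B : Matrix (Fin N) (Fin m) ℝ)
    (C : Matrix (Fin p) (Fin N) ℝ) (hA : A.IsHurwitz)
    (u : ℝ → EuclideanSpace ℝ (Fin m))
    (hu_meas : Measurable u)
    (hu_L2 : IntegrableOn (fun s => ‖u s‖ ^ 2) (Set.Ici (0 : ℝ)))
    (y : ℝ → EuclideanSpace ℝ (Fin p))
    (hy : ∀ t : ℝ, y t = ∫ s in (0 : ℝ)..t,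
        (WithLp.equiv 2 (Fin p → ℝ)).symm
          ((C * NormedSpace.exp ((t - s) • A) * B).mulVec
            (WithLp.equiv 2 (Fin m → ℝ) (u s)))) :
    ∀ t ≥ (0 : ℝ), ‖y t‖ ≤
      Real.sqrt (∫ τ in Set.Ici (0 : ℝ), frobSq (C * NormedSpace.exp (τ • A) * B)) *
        Real.sqrt (∫ s in Set.Ici (0 : ℝ), ‖u s‖ ^ 2) :=
  output_Linfty_le_H2_mul_L2_general A B C hA u hu_L2 y hy
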